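/- Let (X,d) be an unbounded metric space and let n≥2 be an integer. Then the inequality |V(G_{X,r̃})| ≤ n holds for every scaling sequence r̃ if and only if, for every scaling sequence r̃, both of the following are valid: (1) |C| ≤ n holds for every clique C ⊆ V(G_{X,r̃}); (2) the labeling ρ⁰ : V(G_{X,r̃}) → ℝ⁺ is injective. -/

import Mathlib

open Filter Topology
open scoped Classical

/-- An unbounded metric space. -/
def UnboundedSpace (X : Type*) [MetricSpace X] : Prop :=
  ¬ Bornology.IsBounded (Set.univ : Set X)

/-- A scaling sequence: positive reals tending to infinity. -/
def ScalingSeq (r : ℕ → ℝ) : Prop :=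
  (∀ n, 0 < r n) ∧ Filter.Tendsto r Filter.atTop Filter.atTop

/-- Two sequences are mutually stable w.r.t. `r` if `d(x_n, y_n)/r_n` has a finite limit. -/
def MutuallyStable {X : Type*} [MetricSpace X] (r : ℕ → ℝ) (x y : ℕ → X) : Prop :=
  ∃ L : ℝ, Filter.Tendsto (fun n => dist (x n) (y n) / r n) Filter.atTop (nhds L)

/-- `Seq(X, r̃)`: sequences going to infinity such that `d(x_n, p)/r_n` has a finite limit. -/
def SeqInf {X : Type*} [MetricSpace X] (r : ℕ → ℝ) (p : X) : Set (ℕ → X) :=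
  {x | Filter.Tendsto (fun n => dist (x n) p) Filter.atTop Filter.atTop ∧
    ∃ L : ℝ, Filter.Tendsto (fun n => dist (x n) p / r n) Filter.atTop (nhds L)}

/-- The relation `x̃ ≡ ỹ`, i.e. `d(x_n, y_n)/r_n → 0`. -/
def EquivSeq {X : Type*} [MetricSpace X] (r : ℕ → ℝ) (x y : ℕ → X) : Prop :=
  Filter.Tendsto (fun n => dist (x n) (y n) / r n) Filter.atTop (nhds 0)

/-- The `≡`-equivalence class of `x` inside `Seq(X, r̃)`. -/
def classOf {X : Type*} [MetricSpace X] (r : ℕ → ℝ) (p : X) (x : ℕ → X) : Set (ℕ → X) :=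
  {y | y ∈ SeqInf r p ∧ EquivSeq r x y}

/-- The vertex set of the cluster graph `G_{X, r̃}`: all `≡`-classes of `Seq(X, r̃)`. -/
def VertexSet {X : Type*} [MetricSpace X] (r : ℕ → ℝ) (p : X) : Set (Set (ℕ → X)) :=
  {v | ∃ x ∈ SeqInf r p, v = classOf r p x}

/-- Adjacency in the cluster graph `G_{X, r̃}`: distinct classes whose representatives
are mutually stable. -/
def AdjacentCl {X : Type*} [MetricSpace X] (r : ℕ → ℝ) (p : X) (u v : Set (ℕ → X)) : Prop :=
  u ∈ VertexSet r p ∧ v ∈ VertexSet r p ∧ u ≠ v ∧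
    ∀ x ∈ u, ∀ y ∈ v, MutuallyStable r x y

/-- The weight `ρ_X` on the cluster graph: for an edge `{u,v}` it is the (unique) limit
`lim d(x_n, y_n)/r_n` for representatives. -/
noncomputable def rhoX {X : Type*} [MetricSpace X] (r : ℕ → ℝ) (u v : Set (ℕ → X)) : ℝ :=
  sSup {L : ℝ | ∃ x ∈ u, ∃ y ∈ v,
    Filter.Tendsto (fun n => dist (x n) (y n) / r n) Filter.atTop (nhds L)}

/-- The root `ν₀ = X̃⁰_{∞,r̃}`: sequences with `d(z_n,p) → ∞` and `d(z_n,p)/r_n → 0`. -/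
def rootClass {X : Type*} [MetricSpace X] (r : ℕ → ℝ) (p : X) : Set (ℕ → X) :=
  {z | Filter.Tendsto (fun n => dist (z n) p) Filter.atTop Filter.atTop ∧
    Filter.Tendsto (fun n => dist (z n) p / r n) Filter.atTop (nhds 0)}

/-- The labeling `ρ⁰` of vertices: `ρ⁰(v) = lim d(x_n,p)/r_n` for `x̃ ∈ v`. -/
noncomputable def rho0 {X : Type*} [MetricSpace X] (r : ℕ → ℝ) (p : X)
    (v : Set (ℕ → X)) : ℝ :=
  sSup {L : ℝ | ∃ x ∈ v, Filter.Tendsto (fun n => dist (x n) p / r n) Filter.atTop (nhds L)}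

/-- A self-stable family: a subset of `Seq(X, r̃)` any two of whose members are
mutually stable. -/
def SelfStable {X : Type*} [MetricSpace X] (r : ℕ → ℝ) (p : X) (F : Set (ℕ → X)) : Prop :=
  F ⊆ SeqInf r p ∧ ∀ x ∈ F, ∀ y ∈ F, MutuallyStable r x y

/-- A maximal self-stable set `X̃_{∞, r̃}`. -/
def MaxSelfStable {X : Type*} [MetricSpace X] (r : ℕ → ℝ) (p : X) (F : Set (ℕ → X)) : Prop :=
  SelfStable r p F ∧ ∀ F', SelfStable r p F' → F ⊆ F' → F = F'

/-- The pretangent space `Ω^X_{∞,r̃}` attached to a maximal self-stable set `F`: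
the set of `≡`-classes of members of `F`. -/
def PretangentCl {X : Type*} [MetricSpace X] (r : ℕ → ℝ) (F : Set (ℕ → X)) :
    Set (Set (ℕ → X)) :=
  {v | ∃ x ∈ F, v = {y | y ∈ F ∧ EquivSeq r x y}}

/-- A clique in the cluster graph `G_{X, r̃}`. -/
def IsCliqueCl {X : Type*} [MetricSpace X] (r : ℕ → ℝ) (p : X)
    (C : Set (Set (ℕ → X))) : Prop :=
  C ⊆ VertexSet r p ∧ ∀ u ∈ C, ∀ v ∈ C, u ≠ v → AdjacentCl r p u v

/-!
Two distinct vertices with the same label `c` would let one build arbitrarily many vertices: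
pass to a subsequence on which their representatives `x, y` stay `ε r_m` apart, and splice `x`
and `y` according to `m mod k`; every splice is still at distance `≈ c r_m` from `p`, and two
splices differ by `d(x_m, y_m)` on a whole residue class. Conversely, finitely many vertices
have representatives which, after passing to a subsequence (compactness of a cube), become
pairwise mutually stable; their classes then form a clique, and they stay distinct because
subsequences preserve the labels `ρ⁰`, which are injective.
-/

section ClusterGraph

variable {X : Type*} [MetricSpace X] {r : ℕ → ℝ} {p : X}

theorem EquivSeq.refl (x : ℕ → X) : EquivSeq r x x := by
  simpa only [EquivSeq, dist_self, zero_div] using tendsto_const_nhds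

theorem EquivSeq.symm {x y : ℕ → X} (h : EquivSeq r x y) : EquivSeq r y x := by
  simpa only [EquivSeq, dist_comm] using h

theorem EquivSeq.tendsto_dist_div (hr : ∀ n, 0 < r n) {x y z : ℕ → X} (hxy : EquivSeq r x y)
    {L : ℝ} (h : Tendsto (fun n => dist (x n) (z n) / r n) atTop (𝓝 L)) :
    Tendsto (fun n => dist (y n) (z n) / r n) atTop (𝓝 L) := by
  have hdiff : Tendsto (fun n => dist (x n) (z n) / r n - dist (y n) (z n) / r n)
      atTop (𝓝 0) := by
    refine squeeze_zero_norm (fun n => ?_) hxy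
    rw [← sub_div, Real.norm_eq_abs, abs_div, abs_of_pos (hr n)]
    exact div_le_div_of_nonneg_right (abs_dist_sub_le _ _ _) (hr n).le
  simpa using h.sub hdiff

theorem MutuallyStable.of_equivSeq (hr : ∀ n, 0 < r n) {x x' y y' : ℕ → X}
    (h : MutuallyStable r x y) (hx : EquivSeq r x x') (hy : EquivSeq r y y') :
    MutuallyStable r x' y' := by
  obtain ⟨L, hL⟩ := h
  have hx' := hx.tendsto_dist_div hr hL
  simp only [dist_comm (x' _)] at hx'
  refine ⟨L, ?_⟩
  simpa only [dist_comm (y' _)] using hy.tendsto_dist_div hr hx'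

theorem classOf_eq_classOf_iff (hr : ∀ n, 0 < r n) {x y : ℕ → X} (hx : x ∈ SeqInf r p) :
    classOf r p x = classOf r p y ↔ EquivSeq r x y := by
  refine ⟨fun h => ?_, fun h => Set.ext fun z => and_congr_right fun _ => ⟨?_, ?_⟩⟩
  · have hx' : x ∈ classOf r p y := h ▸ ⟨hx, EquivSeq.refl x⟩
    exact hx'.2.symm
  · exact h.tendsto_dist_div hr
  · exact h.symm.tendsto_dist_div hr

theorem rho0_classOf (hr : ∀ n, 0 < r n) {x : ℕ → X} (hx : x ∈ SeqInf r p) {L : ℝ}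
    (hL : Tendsto (fun n => dist (x n) p / r n) atTop (𝓝 L)) :
    rho0 r p (classOf r p x) = L := by
  have hlimits : {L' : ℝ | ∃ y ∈ classOf r p x,
      Tendsto (fun n => dist (y n) p / r n) atTop (𝓝 L')} = {L} := by
    ext L'
    constructor
    · rintro ⟨y, ⟨-, hxy⟩, hy⟩
      exact tendsto_nhds_unique hy (hxy.tendsto_dist_div (z := fun _ => p) hr hL)
    · rintro rfl
      exact ⟨x, ⟨hx, EquivSeq.refl x⟩, hL⟩
  rw [rho0, hlimits, csSup_singleton]

theorem ScalingSeq.comp_strictMono (hr : ScalingSeq r) {φ : ℕ → ℕ} (hφ : StrictMono φ) :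
    ScalingSeq (r ∘ φ) :=
  ⟨fun n => hr.1 (φ n), hr.2.comp hφ.tendsto_atTop⟩

theorem comp_mem_seqInf {x : ℕ → X} (hx : x ∈ SeqInf r p) {φ : ℕ → ℕ} (hφ : StrictMono φ) :
    x ∘ φ ∈ SeqInf (r ∘ φ) p :=
  ⟨hx.1.comp hφ.tendsto_atTop, hx.2.imp fun _ hL => hL.comp hφ.tendsto_atTop⟩

theorem ite_mem_seqInf (P : ℕ → Prop) [DecidablePred P] {x y : ℕ → X} {c : ℝ}
    (hx : x ∈ SeqInf r p) (hy : y ∈ SeqInf r p)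
    (hxc : Tendsto (fun n => dist (x n) p / r n) atTop (𝓝 c))
    (hyc : Tendsto (fun n => dist (y n) p / r n) atTop (𝓝 c)) :
    (fun n => if P n then y n else x n) ∈ SeqInf r p := by
  refine ⟨?_, c, ?_⟩
  · simp only [apply_ite (dist · p)]
    exact (hy.1.mono_left inf_le_left).if (p := P) (hx.1.mono_left inf_le_left)
  · simp only [apply_ite (dist · p), ite_div]
    exact (hyc.mono_left inf_le_left).if (p := P) (hxc.mono_left inf_le_left)

theorem adjacentCl_classOf (hr : ∀ n, 0 < r n) {x y : ℕ → X} (hx : x ∈ SeqInf r p)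
    (hy : y ∈ SeqInf r p) (hxy : MutuallyStable r x y) (hne : classOf r p x ≠ classOf r p y) :
    AdjacentCl r p (classOf r p x) (classOf r p y) :=
  ⟨⟨x, hx, rfl⟩, ⟨y, hy, rfl⟩, hne, fun _ hx' _ hy' => hxy.of_equivSeq hr hx'.2 hy'.2⟩

theorem isCliqueCl_range_classOf {ι : Type*} (hr : ∀ n, 0 < r n) {x : ι → ℕ → X}
    (hx : ∀ i, x i ∈ SeqInf r p) (hxx : ∀ i j, MutuallyStable r (x i) (x j)) :
    IsCliqueCl r p (Set.range fun i => classOf r p (x i)) := by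
  refine ⟨Set.range_subset_iff.2 fun i => ⟨x i, hx i, rfl⟩, ?_⟩
  rintro _ ⟨i, rfl⟩ _ ⟨j, rfl⟩ hne
  exact adjacentCl_classOf hr (hx i) (hx j) (hxx i j) hne

theorem exists_le_dist_div_of_mem_seqInf {x : ℕ → X} (hx : x ∈ SeqInf r p) :
    ∃ B, ∀ n, dist (x n) p / r n ≤ B := by
  obtain ⟨L, hL⟩ := hx.2
  obtain ⟨B, hB⟩ := hL.bddAbove_range
  exact ⟨B, fun n => hB ⟨n, rfl⟩⟩

theorem exists_strictMono_mutuallyStable {ι : Type*} [Finite ι] (hr : ∀ n, 0 < r n)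
    {x : ι → ℕ → X} (hx : ∀ i, x i ∈ SeqInf r p) :
    ∃ φ : ℕ → ℕ, StrictMono φ ∧ ∀ i j, MutuallyStable (r ∘ φ) (x i ∘ φ) (x j ∘ φ) := by
  choose B hB using fun i => exists_le_dist_div_of_mem_seqInf (hx i)
  let d : ℕ → ι × ι → ℝ := fun n ij => dist (x ij.1 n) (x ij.2 n) / r n
  have hd : ∀ n, d n ∈ Set.univ.pi fun ij => Set.Icc 0 (B ij.1 + B ij.2) := by
    refine fun n ij _ => ⟨div_nonneg dist_nonneg (hr n).le, ?_⟩
    calc d n ij ≤ dist (x ij.1 n) p / r n + dist (x ij.2 n) p / r n := by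
          rw [← add_div]
          exact div_le_div_of_nonneg_right (dist_triangle_right _ _ p) (hr n).le
      _ ≤ B ij.1 + B ij.2 := add_le_add (hB _ n) (hB _ n)
  obtain ⟨L, -, φ, hφ, hL⟩ := (isCompact_univ_pi fun _ => isCompact_Icc).tendsto_subseq hd
  exact ⟨φ, hφ, fun i j => ⟨L (i, j), (continuous_apply (i, j)).continuousAt.tendsto.comp hL⟩⟩

theorem exists_strictMono_le_dist_div (hr : ∀ n, 0 < r n) {x y : ℕ → X}
    (h : ¬ EquivSeq r x y) :
    ∃ ε > 0, ∃ φ : ℕ → ℕ, StrictMono φ ∧ ∀ n, ε ≤ dist (x (φ n)) (y (φ n)) / r (φ n) := by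
  have hfreq : ∃ ε > 0, ∃ᶠ n in atTop, ε ≤ dist (x n) (y n) / r n := by
    by_contra! hsmall
    refine h (tendsto_order.2 ⟨fun a ha => Eventually.of_forall fun n => ?_, hsmall⟩)
    exact ha.trans_le (div_nonneg dist_nonneg (hr n).le)
  obtain ⟨ε, hε, hfreq⟩ := hfreq
  exact ⟨ε, hε, extraction_of_frequently_atTop hfreq⟩

def interleave (k : ℕ) (x y : ℕ → X) (i : ℕ) : ℕ → X :=
  fun n => if n % k < i then y n else x n

theorem not_equivSeq_interleave {x y : ℕ → X} {ε : ℝ} (hε : 0 < ε)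
    (hxy : ∀ n, ε ≤ dist (x n) (y n) / r n) {k i j : ℕ} (hik : i < k) (hij : i < j) :
    ¬ EquivSeq r (interleave k x y i) (interleave k x y j) := by
  intro h
  have hres : ∃ᶠ n in atTop, n % k = i := frequently_atTop.2 fun N =>
    ⟨i + k * N, le_add_left (Nat.le_mul_of_pos_left N (by omega)),
      by rw [Nat.add_mul_mod_self_left, Nat.mod_eq_of_lt hik]⟩
  obtain ⟨n, hlt, hn⟩ := ((h.eventually (gt_mem_nhds hε)).and_frequently hres).exists
  simp only [interleave, hn, lt_irrefl, if_false, hij, if_true] at hlt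
  exact (hxy n).not_gt hlt

theorem natCast_le_mk_vertexSet (hr : ∀ n, 0 < r n) {k : ℕ} {w : Fin k → ℕ → X}
    (hw : ∀ i, w i ∈ SeqInf r p) (hne : Pairwise fun i j => ¬ EquivSeq r (w i) (w j)) :
    (k : Cardinal) ≤ Cardinal.mk ↥(VertexSet r p) := by
  let v : Fin k → VertexSet r p := fun i => ⟨classOf r p (w i), w i, hw i, rfl⟩
  have hv : Function.Injective v := fun i j hij => by
    by_contra hne'
    exact hne hne' ((classOf_eq_classOf_iff hr (hw i)).1 (congrArg Subtype.val hij))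
  simpa using Cardinal.lift_mk_le_lift_mk_of_injective hv

theorem injOn_rho0_of_forall_mk_vertexSet_le {n : ℕ}
    (hV : ∀ r : ℕ → ℝ, ScalingSeq r → Cardinal.mk ↥(VertexSet r p) ≤ (n : Cardinal))
    (hr : ScalingSeq r) : Set.InjOn (rho0 r p) (VertexSet r p) := by
  rintro _ ⟨x, hx, rfl⟩ _ ⟨y, hy, rfl⟩ hxy
  obtain ⟨c, hxc⟩ := hx.2
  obtain ⟨c', hyc⟩ := hy.2
  rw [rho0_classOf hr.1 hx hxc, rho0_classOf hr.1 hy hyc] at hxy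
  subst hxy
  by_contra hne
  obtain ⟨ε, hε, φ, hφ, hsep⟩ :=
    exists_strictMono_le_dist_div hr.1 (mt (classOf_eq_classOf_iff hr.1 hx).2 hne)
  let w : Fin (n + 1) → ℕ → X := fun i => interleave (n + 1) (x ∘ φ) (y ∘ φ) i
  have hw : ∀ i, w i ∈ SeqInf (r ∘ φ) p := fun i =>
    ite_mem_seqInf _ (comp_mem_seqInf hx hφ) (comp_mem_seqInf hy hφ)
      (hxc.comp hφ.tendsto_atTop) (hyc.comp hφ.tendsto_atTop)
  have hne : Pairwise fun i j => ¬ EquivSeq (r ∘ φ) (w i) (w j) := fun i j hij =>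
    (lt_or_gt_of_ne hij).elim (fun h => not_equivSeq_interleave hε hsep i.2 h)
      (fun h hji => not_equivSeq_interleave hε hsep j.2 h hji.symm)
  have hcard := (natCast_le_mk_vertexSet (hr.comp_strictMono hφ).1 hw hne).trans
    (hV _ (hr.comp_strictMono hφ))
  norm_cast at hcard
  omega

theorem mk_vertexSet_le_of_forall_isCliqueCl {n : ℕ}
    (h : ∀ r : ℕ → ℝ, ScalingSeq r →
      (∀ C : Set (Set (ℕ → X)), IsCliqueCl r p C → Cardinal.mk ↥C ≤ (n : Cardinal)) ∧
      Set.InjOn (rho0 r p) (VertexSet r p))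
    (hr : ScalingSeq r) : Cardinal.mk ↥(VertexSet r p) ≤ n := by
  refine Cardinal.mk_le_iff_forall_finset_subset_card_le.2 fun s hs => ?_
  choose x hx hxv using fun v : s => hs v.2
  obtain ⟨φ, hφ, hstable⟩ := exists_strictMono_mutuallyStable hr.1 hx
  have hr' := hr.comp_strictMono hφ
  have hx' := fun v => comp_mem_seqInf (hx v) hφ
  have hrho : ∀ v : s, rho0 (r ∘ φ) p (classOf (r ∘ φ) p (x v ∘ φ)) = rho0 r p v := fun v => by
    obtain ⟨L, hL⟩ := (hx v).2
    rw [hxv v, rho0_classOf hr.1 (hx v) hL,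
      rho0_classOf hr'.1 (hx' v) (hL.comp hφ.tendsto_atTop)]
  have hinj : Function.Injective fun v : s => classOf (r ∘ φ) p (x v ∘ φ) := fun v w hvw =>
    Subtype.ext <| (h r hr).2 (hs v.2) (hs w.2) <| by
      rw [← hrho v, ← hrho w]
      exact congrArg _ hvw
  have hclique := (h _ hr').1 _ (isCliqueCl_range_classOf hr'.1 hx' hstable)
  rwa [Cardinal.mk_range_eq _ hinj, Cardinal.mk_coe_finset, Nat.cast_le] at hclique

end ClusterGraph

theorem card_vertexSet_le_iff_clique_and_injective_general {X : Type*} [MetricSpace X]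
    (p : X) (n : ℕ) :
    (∀ r : ℕ → ℝ, ScalingSeq r → Cardinal.mk ↥(VertexSet r p) ≤ (n : Cardinal)) ↔
      (∀ r : ℕ → ℝ, ScalingSeq r →
        (∀ C : Set (Set (ℕ → X)), IsCliqueCl r p C → Cardinal.mk ↥C ≤ (n : Cardinal)) ∧
        Set.InjOn (rho0 r p) (VertexSet r p)) :=
  ⟨fun hV r hr => ⟨fun _ hC => (Cardinal.mk_le_mk_of_subset hC.1).trans (hV r hr),
    injOn_rho0_of_forall_mk_vertexSet_le hV hr⟩,
  fun h _ hr => mk_vertexSet_le_of_forall_isCliqueCl h hr⟩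

/-- Theorem t2.2.6. `|V(G_{X,r̃})| ≤ n` for every scaling sequence
iff for every scaling sequence all cliques have at most `n` elements and the labeling
`ρ⁰` is injective. -/
theorem card_vertexSet_le_iff_clique_and_injective {X : Type*} [MetricSpace X]
    (hX : UnboundedSpace X) (p : X) (n : ℕ) (hn : 2 ≤ n) :
    (∀ r : ℕ → ℝ, ScalingSeq r → Cardinal.mk ↥(VertexSet r p) ≤ (n : Cardinal)) ↔
      (∀ r : ℕ → ℝ, ScalingSeq r →
        (∀ C : Set (Set (ℕ → X)), IsCliqueCl r p C → Cardinal.mk ↥C ≤ (n : Cardinal)) ∧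
        Set.InjOn (rho0 r p) (VertexSet r p)) :=
  card_vertexSet_le_iff_clique_and_injective_general p n
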